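/- Let x, y, z ∈ ℝ³ be unit vectors and let d ≥ 1. Define the 3×3 array B of 4d×4d complex matrices with entries B 0 0 = (σ(x) ⊗ 1₂) ⊗ 1_d, B 0 1 = (1₂ ⊗ σ(x)) ⊗ 1_d, B 0 2 = (σ(x) ⊗ σ(x)) ⊗ 1_d, B 1 0 = (1₂ ⊗ σ(z)) ⊗ 1_d, B 1 1 = (σ(z) ⊗ 1₂) ⊗ 1_d, B 1 2 = (σ(z) ⊗ σ(z)) ⊗ 1_d, B 2 0 = (σ(x) ⊗ σ(z)) ⊗ 1_d, B 2 1 = (σ(z) ⊗ σ(x)) ⊗ 1_d, B 2 2 = (σ(y) ⊗ σ(y)) ⊗ 1_d, where ⊗ is the Kronecker product, 1₂ the 2×2 identity and 1_d the d×d identity. Then {x, y, z} is an orthonormal basis of ℝ³ if and only if B satisfies the magic square equations. -/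

import Mathlib

/-!
The Pauli vector map satisfies `σ(a) σ(b) = (a ⬝ b) + i σ(a × b)`, so
`σ(x) σ(z) σ(y) = i det(x, z, y) + σ((x ⬝ z) y − (x × z) × y)` has trace `2i det(x, z, y)`.

If `x, y, z` are orthonormal, `σ(x)` and `σ(z)` are anticommuting involutions whose product with
`σ(y)` is the scalar `± i`, and any such triple fills the Peres–Mermin square.

Conversely, the last column of the square says `(M ⊗ M) ⊗ 1 = -1` for `M = σ(x) σ(z) σ(y)`;
taking traces gives `tr(M)² = -4`, i.e. `det(x, z, y)² = 1`. For unit vectors this square is the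
Gram determinant `1 + 2abc - a² - b² - c²` of the mutual dot products `a, b, c`, and by
Cauchy–Schwarz it equals `1` only when `a = b = c = 0`.
-/

open Matrix
open scoped Kronecker

/-- The Pauli matrix σ_x. -/
def pauliX : Matrix (Fin 2) (Fin 2) ℂ := !![0, 1; 1, 0]

/-- The Pauli matrix σ_y. -/
def pauliY : Matrix (Fin 2) (Fin 2) ℂ := !![0, -Complex.I; Complex.I, 0]

/-- The Pauli matrix σ_z. -/
def pauliZ : Matrix (Fin 2) (Fin 2) ℂ := !![1, 0; 0, -1]

/-- The Pauli vector map σ : ℝ³ → M₂(ℂ), a ↦ a₁•σ_x + a₂•σ_y + a₃•σ_z. -/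
def pauliVec (a : Fin 3 → ℝ) : Matrix (Fin 2) (Fin 2) ℂ :=
  (a 0 : ℂ) • pauliX + (a 1 : ℂ) • pauliY + (a 2 : ℂ) • pauliZ

/-- The dot product on ℝ³. -/
def dot3 (u v : Fin 3 → ℝ) : ℝ := u 0 * v 0 + u 1 * v 1 + u 2 * v 2

/-- A 3×3 array of square complex matrices satisfies the magic square equations:
entries in the same row commute, entries in the same column commute, each row
multiplies to 1, the first two columns multiply to 1, and the last column
multiplies to -1. -/
def MagicSquare {n : Type*} [Fintype n] [DecidableEq n]
    (A : Fin 3 → Fin 3 → Matrix n n ℂ) : Prop :=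
  (∀ i j j', A i j * A i j' = A i j' * A i j) ∧
  (∀ j i i', A i j * A i' j = A i' j * A i j) ∧
  (∀ i, A i 0 * A i 1 * A i 2 = 1) ∧
  (∀ j : Fin 3, j ≠ 2 → A 0 j * A 1 j * A 2 j = 1) ∧
  A 0 2 * A 1 2 * A 2 2 = -1

/-- The Peres–Mermin style table built from σ(x), σ(y), σ(z), padded by a d×d
identity tensor factor. -/
def magicB (x y z : Fin 3 → ℝ) (d : ℕ) :
    Fin 3 → Fin 3 → Matrix ((Fin 2 × Fin 2) × Fin d) ((Fin 2 × Fin 2) × Fin d) ℂ :=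
  ![![(pauliVec x ⊗ₖ (1 : Matrix (Fin 2) (Fin 2) ℂ)) ⊗ₖ (1 : Matrix (Fin d) (Fin d) ℂ),
      ((1 : Matrix (Fin 2) (Fin 2) ℂ) ⊗ₖ pauliVec x) ⊗ₖ (1 : Matrix (Fin d) (Fin d) ℂ),
      (pauliVec x ⊗ₖ pauliVec x) ⊗ₖ (1 : Matrix (Fin d) (Fin d) ℂ)],
    ![((1 : Matrix (Fin 2) (Fin 2) ℂ) ⊗ₖ pauliVec z) ⊗ₖ (1 : Matrix (Fin d) (Fin d) ℂ),
      (pauliVec z ⊗ₖ (1 : Matrix (Fin 2) (Fin 2) ℂ)) ⊗ₖ (1 : Matrix (Fin d) (Fin d) ℂ),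
      (pauliVec z ⊗ₖ pauliVec z) ⊗ₖ (1 : Matrix (Fin d) (Fin d) ℂ)],
    ![(pauliVec x ⊗ₖ pauliVec z) ⊗ₖ (1 : Matrix (Fin d) (Fin d) ℂ),
      (pauliVec z ⊗ₖ pauliVec x) ⊗ₖ (1 : Matrix (Fin d) (Fin d) ℂ),
      (pauliVec y ⊗ₖ pauliVec y) ⊗ₖ (1 : Matrix (Fin d) (Fin d) ℂ)]]

lemma dot3_eq_dotProduct (u v : Fin 3 → ℝ) : dot3 u v = u ⬝ᵥ v := by
  simp [dot3, dotProduct, Fin.sum_univ_three]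

lemma sq_dotProduct_le {n : Type*} [Fintype n] (u v : n → ℝ) :
    (u ⬝ᵥ v) ^ 2 ≤ (u ⬝ᵥ u) * (v ⬝ᵥ v) := by
  simpa only [dotProduct, ← sq] using Finset.sum_mul_sq_le_sq_mul_sq Finset.univ u v

lemma sq_triple_product {R : Type*} [CommRing R] (u v w : Fin 3 → R) :
    (u ⨯₃ v ⬝ᵥ w) ^ 2 = (u ⬝ᵥ u) * (v ⬝ᵥ v) * (w ⬝ᵥ w) + 2 * (u ⬝ᵥ v) * (v ⬝ᵥ w) * (u ⬝ᵥ w)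
      - (u ⬝ᵥ u) * (v ⬝ᵥ w) ^ 2 - (v ⬝ᵥ v) * (u ⬝ᵥ w) ^ 2 - (w ⬝ᵥ w) * (u ⬝ᵥ v) ^ 2 := by
  simp [cross_apply, dotProduct, Fin.sum_univ_three]
  ring

lemma sq_triple_product_eq_one_iff {u v w : Fin 3 → ℝ}
    (hu : u ⬝ᵥ u = 1) (hv : v ⬝ᵥ v = 1) (hw : w ⬝ᵥ w = 1) :
    (u ⨯₃ v ⬝ᵥ w) ^ 2 = 1 ↔ u ⬝ᵥ v = 0 ∧ u ⬝ᵥ w = 0 ∧ v ⬝ᵥ w = 0 := by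
  rw [sq_triple_product, hu, hv, hw]
  refine ⟨fun h => ?_, fun ⟨huv, huw, hvw⟩ => by simp [huv, huw, hvw]⟩
  have hvw := sq_dotProduct_le v w
  rw [hv, hw] at hvw
  have hsum : (u ⬝ᵥ v - (v ⬝ᵥ w) * (u ⬝ᵥ w)) ^ 2 + (u ⬝ᵥ w) ^ 2 * (1 - (v ⬝ᵥ w) ^ 2)
      + (v ⬝ᵥ w) ^ 2 = 0 := by
    linear_combination -h
  have h₁ := sq_nonneg (u ⬝ᵥ v - (v ⬝ᵥ w) * (u ⬝ᵥ w))
  have h₂ := mul_nonneg (sq_nonneg (u ⬝ᵥ w)) (sub_nonneg.2 hvw)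
  have hvw0 : v ⬝ᵥ w = 0 := pow_eq_zero_iff two_ne_zero |>.1 (by linarith [sq_nonneg (v ⬝ᵥ w)])
  rw [hvw0] at hsum
  refine ⟨?_, ?_, hvw0⟩ <;> nlinarith [sq_nonneg (u ⬝ᵥ v), sq_nonneg (u ⬝ᵥ w)]

lemma Commute.kronecker {R m n : Type*} [CommSemiring R] [Fintype m] [Fintype n]
    {A C : Matrix m m R} {B D : Matrix n n R} (h₁ : Commute A C) (h₂ : Commute B D) :
    Commute (A ⊗ₖ B) (C ⊗ₖ D) := by
  rw [Commute, SemiconjBy, ← mul_kronecker_mul, ← mul_kronecker_mul, h₁.eq, h₂.eq]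

lemma commute_kronecker_of_anticommute {R m n : Type*} [CommRing R] [Fintype m] [Fintype n]
    {A C : Matrix m m R} {B D : Matrix n n R} (h₁ : A * C = -(C * A)) (h₂ : B * D = -(D * B)) :
    Commute (A ⊗ₖ B) (C ⊗ₖ D) := by
  rw [Commute, SemiconjBy, ← mul_kronecker_mul, ← mul_kronecker_mul, h₁, h₂,
    ← neg_one_smul R (C * A), ← neg_one_smul R (D * B), smul_kronecker, kronecker_smul, smul_smul,
    neg_one_mul, neg_neg, one_smul]

lemma pairwise_commute_fin_three {M : Type*} [Mul M] {f : Fin 3 → M}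
    (h₀₁ : Commute (f 0) (f 1)) (h₀₂ : Commute (f 0) (f 2)) (h₁₂ : Commute (f 1) (f 2))
    (i j : Fin 3) : Commute (f i) (f j) := by
  fin_cases i <;> fin_cases j <;> simp [h₀₁, h₀₂, h₁₂, h₀₁.symm, h₀₂.symm, h₁₂.symm]

lemma neg_one_kronecker_one {m n : Type*} [DecidableEq m] [DecidableEq n] :
    (-1 : Matrix m m ℂ) ⊗ₖ (1 : Matrix n n ℂ) = -1 := by
  rw [← neg_one_smul ℂ (1 : Matrix m m ℂ), smul_kronecker, one_kronecker_one, neg_one_smul]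

lemma MagicSquare.kronecker_one {m n : Type*} [Fintype m] [DecidableEq m] [Fintype n]
    [DecidableEq n] {A : Fin 3 → Fin 3 → Matrix m m ℂ} (hA : MagicSquare A) :
    MagicSquare (fun i j => A i j ⊗ₖ (1 : Matrix n n ℂ)) := by
  obtain ⟨hrow, hcol, hrow_prod, hcol_prod, hlast⟩ := hA
  refine ⟨fun i j j' => ?_, fun j i i' => ?_, fun i => ?_, fun j hj => ?_, ?_⟩ <;>
    simp only [← mul_kronecker_mul, mul_one]
  · rw [hrow]
  · rw [hcol]
  · rw [hrow_prod, one_kronecker_one]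
  · rw [hcol_prod j hj, one_kronecker_one]
  · rw [hlast, neg_one_kronecker_one]

def peresMermin {R n : Type*} [CommSemiring R] [DecidableEq n] (X Y Z : Matrix n n R) :
    Fin 3 → Fin 3 → Matrix (n × n) (n × n) R :=
  ![![X ⊗ₖ 1, 1 ⊗ₖ X, X ⊗ₖ X],
    ![1 ⊗ₖ Z, Z ⊗ₖ 1, Z ⊗ₖ Z],
    ![X ⊗ₖ Z, Z ⊗ₖ X, Y ⊗ₖ Y]]

lemma magicSquare_peresMermin {n : Type*} [Fintype n] [DecidableEq n] {X Y Z : Matrix n n ℂ}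
    {μ : ℂ} (hX : X * X = 1) (hZ : Z * Z = 1) (hXZ : X * Z = -(Z * X))
    (hXZY : X * Z * Y = μ • 1) (hμ : μ * μ = -1) :
    MagicSquare (peresMermin X Y Z) := by
  have hY : Y = μ • (Z * X) := calc
    Y = Z * X * (X * Z * Y) := by
      simp only [← mul_assoc]; rw [mul_assoc Z X X, hX, mul_one, hZ, one_mul]
    _ = μ • (Z * X) := by rw [hXZY, mul_smul_one]
  have hZX : Z * X = -(X * Z) := by rw [hXZ, neg_neg]
  have hXY : X * Y = -(Y * X) := by
    rw [hY, mul_smul_comm, smul_mul_assoc, ← mul_assoc, hXZ, neg_mul, mul_assoc, hX, smul_neg]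
  have hZY : Z * Y = -(Y * Z) := by
    rw [hY, mul_smul_comm, smul_mul_assoc, ← mul_assoc, hZ, one_mul, hZX, neg_mul, mul_assoc, hZ,
      mul_one, smul_neg, neg_neg]
  have hZXY : Z * X * Y = (-μ) • 1 := by
    rw [neg_smul, ← hXZY, ← neg_mul, hXZ, neg_neg]
  refine ⟨fun k => ?rows, fun k => ?cols, fun i => ?_, fun j hj => ?_, ?_⟩
  case rows | cols =>
    fin_cases k <;> apply pairwise_commute_fin_three <;> simp [peresMermin]
    all_goals first
      | exact Commute.kronecker (by simp) (by simp)
      | exact commute_kronecker_of_anticommute (by assumption) (by assumption)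
  · fin_cases i
    · simp [peresMermin, ← mul_kronecker_mul, hX]
    · simp [peresMermin, ← mul_kronecker_mul, hZ]
    · simp only [peresMermin, Fin.reduceFinMk, Matrix.cons_val, ← mul_kronecker_mul]
      rw [hXZY, hZXY, smul_kronecker, kronecker_smul, smul_smul, one_kronecker_one, mul_neg, hμ,
        neg_neg, one_smul]
  · fin_cases j <;> simp [peresMermin, ← mul_kronecker_mul, hX, hZ] at hj ⊢
  · simp [peresMermin, ← mul_kronecker_mul, hXZY, smul_kronecker, kronecker_smul, smul_smul, hμ]

lemma sq_trace_of_kronecker_self_kronecker_one_eq_neg_one {m n : Type*} [Fintype m]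
    [DecidableEq m] [Nonempty m] [Fintype n] [DecidableEq n] {M : Matrix n n ℂ}
    (h : M ⊗ₖ M ⊗ₖ (1 : Matrix m m ℂ) = -1) : trace M ^ 2 = -(Fintype.card n) ^ 2 := by
  have htr := congrArg trace h
  rw [trace_kronecker, trace_kronecker, trace_neg, trace_one, trace_one, Fintype.card_prod,
    Fintype.card_prod] at htr
  have hm : (Fintype.card m : ℂ) ≠ 0 := by exact_mod_cast Fintype.card_ne_zero
  apply mul_right_cancel₀ hm
  push_cast at htr
  linear_combination htr

@[simp]
lemma pauliVec_zero : pauliVec 0 = 0 := by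
  simp [pauliVec]

@[simp]
lemma pauliVec_neg (a : Fin 3 → ℝ) : pauliVec (-a) = -pauliVec a := by
  simp only [pauliVec, Pi.neg_apply, Complex.ofReal_neg, neg_smul]
  abel

@[simp]
lemma trace_pauliVec (a : Fin 3 → ℝ) : trace (pauliVec a) = 0 := by
  simp [pauliVec, pauliX, pauliY, pauliZ, trace_fin_two]

lemma pauliVec_mul_pauliVec (a b : Fin 3 → ℝ) :
    pauliVec a * pauliVec b = ((a ⬝ᵥ b : ℝ) : ℂ) • 1 + Complex.I • pauliVec (a ⨯₃ b) := by
  ext i j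
  fin_cases i <;> fin_cases j <;>
    simp [pauliVec, pauliX, pauliY, pauliZ, cross_apply, vec3_dotProduct] <;> ring_nf <;>
    simp only [Complex.I_sq] <;> ring

lemma pauliVec_mul_self {a : Fin 3 → ℝ} (ha : a ⬝ᵥ a = 1) : pauliVec a * pauliVec a = 1 := by
  simp [pauliVec_mul_pauliVec, ha]

lemma pauliVec_anticommute {a b : Fin 3 → ℝ} (hab : a ⬝ᵥ b = 0) :
    pauliVec a * pauliVec b = -(pauliVec b * pauliVec a) := by
  rw [pauliVec_mul_pauliVec, pauliVec_mul_pauliVec, dotProduct_comm b a, hab, ← cross_anticomm,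
    pauliVec_neg]
  simp

lemma pauliVec_mul_pauliVec_mul_pauliVec (a b c : Fin 3 → ℝ) :
    pauliVec a * pauliVec b * pauliVec c =
      (Complex.I * ((a ⨯₃ b ⬝ᵥ c : ℝ) : ℂ)) • 1 + ((a ⬝ᵥ b : ℝ) : ℂ) • pauliVec c
        - pauliVec (a ⨯₃ b ⨯₃ c) := by
  rw [pauliVec_mul_pauliVec, add_mul, smul_mul_assoc, smul_mul_assoc, pauliVec_mul_pauliVec,
    one_mul, smul_add, smul_smul, smul_smul, Complex.I_mul_I, neg_one_smul]
  abel

lemma pauliVec_mul_pauliVec_mul_pauliVec_of_orthogonal {a b c : Fin 3 → ℝ} (hab : a ⬝ᵥ b = 0)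
    (hac : a ⬝ᵥ c = 0) (hbc : b ⬝ᵥ c = 0) :
    pauliVec a * pauliVec b * pauliVec c = (Complex.I * ((a ⨯₃ b ⬝ᵥ c : ℝ) : ℂ)) • 1 := by
  rw [pauliVec_mul_pauliVec_mul_pauliVec, hab, cross_cross_eq_smul_sub_smul, hac, hbc]
  simp

lemma trace_pauliVec_mul_pauliVec_mul_pauliVec (a b c : Fin 3 → ℝ) :
    trace (pauliVec a * pauliVec b * pauliVec c) = 2 * Complex.I * ((a ⨯₃ b ⬝ᵥ c : ℝ) : ℂ) := by
  simp [pauliVec_mul_pauliVec_mul_pauliVec]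
  ring

lemma magicB_eq_peresMermin (x y z : Fin 3 → ℝ) (d : ℕ) :
    magicB x y z d = fun i j =>
      peresMermin (pauliVec x) (pauliVec y) (pauliVec z) i j ⊗ₖ (1 : Matrix (Fin d) (Fin d) ℂ) := by
  ext1 i; ext1 j
  fin_cases i <;> fin_cases j <;> rfl

/-- For unit vectors x, y, z ∈ ℝ³ and d ≥ 1: {x, y, z} is an orthonormal basis
of ℝ³ iff the table built from σ(x), σ(y), σ(z) padded by the d×d identity
satisfies the magic square equations. -/
theorem orthonormal_iff_magicSquare (x y z : Fin 3 → ℝ) {d : ℕ} (hd : 1 ≤ d)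
    (hx : dot3 x x = 1) (hy : dot3 y y = 1) (hz : dot3 z z = 1) :
    (dot3 x y = 0 ∧ dot3 x z = 0 ∧ dot3 y z = 0) ↔ MagicSquare (magicB x y z d) := by
  simp only [dot3_eq_dotProduct] at *
  have key := sq_triple_product_eq_one_iff hx hz hy
  set t := x ⨯₃ z ⬝ᵥ y
  constructor
  · rintro ⟨hxy, hxz, hyz⟩
    rw [dotProduct_comm] at hyz
    have ht := key.2 ⟨hxz, hxy, hyz⟩
    rw [magicB_eq_peresMermin]
    refine (magicSquare_peresMermin (pauliVec_mul_self hx) (pauliVec_mul_self hz)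
      (pauliVec_anticommute hxz)
      (pauliVec_mul_pauliVec_mul_pauliVec_of_orthogonal hxz hxy hyz)
      ?_).kronecker_one
    linear_combination (t : ℂ) ^ 2 * Complex.I_sq - (by exact_mod_cast ht : (t : ℂ) ^ 2 = 1)
  · intro h
    have hcol : (pauliVec x * pauliVec z * pauliVec y) ⊗ₖ (pauliVec x * pauliVec z * pauliVec y)
        ⊗ₖ (1 : Matrix (Fin d) (Fin d) ℂ) = -1 := by
      simpa [magicB, ← mul_kronecker_mul] using h.2.2.2.2
    have : NeZero d := ⟨by omega⟩
    have htr := sq_trace_of_kronecker_self_kronecker_one_eq_neg_one hcol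
    rw [trace_pauliVec_mul_pauliVec_mul_pauliVec, Fintype.card_fin] at htr
    have ht : ((t ^ 2 : ℝ) : ℂ) = 1 := by
      push_cast
      linear_combination (-1 / 4 : ℂ) * htr + (t : ℂ) ^ 2 * Complex.I_sq
    obtain ⟨hxz, hxy, hzy⟩ := key.1 (by exact_mod_cast ht)
    exact ⟨hxy, hxz, by rwa [dotProduct_comm]⟩
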